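/- (Corollary 3.1, case (ii).) Let S0 be a q×q real matrix with spectral radius L = ρ(S0) satisfying 0 < L ≤ 1, and let H be an N×N real matrix every complex eigenvalue of which has strictly positive real part. For each complex eigenvalue h of H write Δ(h) = |h|²/L² − (Im h)². Then Δ(h) > 0 for every eigenvalue h, the maximum over eigenvalues h of (Re h − √Δ(h))/|h|² is at most 0 and is strictly less than the minimum over eigenvalues h of (Re h + √Δ(h))/|h|², which is strictly positive; and for every real μ strictly between this maximum and this minimum the matrix I_N⊗S0 − μ(H⊗S0) is Schur. In particular, there exists a positive real μ making I_N⊗S0 − μ(H⊗S0) Schur. -/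

import Mathlib

/-!
The eigenvalues of `(I - μH) ⊗ S0` are products `(1 - μh) s` with `h ∈ σ(H)` and `s ∈ σ(S0)`:
`A ⊗ B` is the product of the commuting matrices `A ⊗ 1` and `1 ⊗ B`; the latter preserves the
`z`-eigenspace of the product, and an eigenvector `y` of it there, with eigenvalue `s`, satisfies
`s (A ⊗ 1) y = z y`, so either `z = 0 = a · 0` or `z / s` is an eigenvalue of `A ⊗ 1`. Since `|s| ≤ L`, it suffices
that `|1 - μh| L < 1` for every `h ∈ σ(H)`. This is a quadratic inequality in `μ` whose roots are
`(Re h ± √Δ(h)) / |h|²`, and `L ≤ 1` gives `Δ(h) ≥ (Re h)²`, so the smaller root is `≤ 0` while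
`Re h > 0` makes the larger one positive.
-/

open Matrix Kronecker

/-- The complex eigenvalues (spectrum of the complexification) of a real square matrix. -/
def specC {ι : Type} [Fintype ι] [DecidableEq ι] (M : Matrix ι ι ℝ) : Set ℂ :=
  spectrum ℂ (M.map (fun x => (x : ℂ)))

def IsSchur {ι : Type} [Fintype ι] [DecidableEq ι] (M : Matrix ι ι ℝ) : Prop :=
  ∀ z ∈ specC M, ‖z‖ < 1

open scoped Pointwise

namespace Module.End

variable {K V : Type*} [Field K] [IsAlgClosed K] [AddCommGroup V] [Module K V]
  [FiniteDimensional K V]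

theorem spectrum_mul_subset_of_commute {f g : End K V} (hfg : Commute f g) :
    spectrum K (f * g) ⊆ spectrum K f * spectrum K g := by
  intro z hz
  rw [← hasEigenvalue_iff_mem_spectrum] at hz
  have hmaps : Set.MapsTo g (eigenspace (f * g) z) (eigenspace (f * g) z) :=
    mapsTo_genEigenspace_of_comm (hfg.mul_left (Commute.refl g)) z 1
  have : Nontrivial (eigenspace (f * g) z) := Submodule.nontrivial_iff_ne_bot.mpr hz
  obtain ⟨b, hb⟩ := exists_eigenvalue (g.restrict hmaps)
  obtain ⟨⟨y, hyz⟩, hyb⟩ := hb.exists_hasEigenvector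
  have hy0 : y ≠ 0 := by simpa using hyb.2
  have hgy : g y = b • y := congrArg Subtype.val (mem_eigenspace_iff.mp hyb.1)
  have hfy : b • f y = z • y := by
    rw [← map_smul, ← hgy]; exact mem_eigenspace_iff.mp hyz
  have hbg : b ∈ spectrum K g :=
    (hasEigenvalue_of_hasEigenvector ⟨mem_eigenspace_iff.mpr hgy, hy0⟩).mem_spectrum
  rcases eq_or_ne b 0 with rfl | hb0
  · have hz0 : z = 0 := by simpa [hy0] using hfy.symm
    have : Nontrivial V := ⟨⟨y, 0, hy0⟩⟩
    obtain ⟨a, ha⟩ := exists_eigenvalue f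
    exact ⟨a, ha.mem_spectrum, 0, hbg, by simp [hz0]⟩
  · have hfy' : f y = (z / b) • y := by
      rw [div_eq_inv_mul, mul_smul, ← hfy, inv_smul_smul₀ hb0]
    have haf : z / b ∈ spectrum K f :=
      (hasEigenvalue_of_hasEigenvector ⟨mem_eigenspace_iff.mpr hfy', hy0⟩).mem_spectrum
    exact ⟨z / b, haf, b, hbg, div_mul_cancel₀ z hb0⟩

end Module.End

namespace Matrix

variable {m n : Type*} [Fintype m] [DecidableEq m] [Fintype n] [DecidableEq n]

theorem spectrum_mul_subset_of_commute {K : Type*} [Field K] [IsAlgClosed K] {P Q : Matrix n n K}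
    (h : Commute P Q) :
    spectrum K (P * Q) ⊆ spectrum K P * spectrum K Q := by
  have := Module.End.spectrum_mul_subset_of_commute (h.map (toLinAlgEquiv' (R := K) (n := n)))
  rwa [← map_mul, AlgEquiv.spectrum_eq, AlgEquiv.spectrum_eq, AlgEquiv.spectrum_eq] at this

theorem spectrum_kronecker_one_subset {R : Type*} [CommRing R] (A : Matrix m m R) :
    spectrum R (A ⊗ₖ (1 : Matrix n n R)) ⊆ spectrum R A := by
  simpa using AlgHom.spectrum_apply_subset
    ((kroneckerAlgEquiv m n R).toAlgHom.comp Algebra.TensorProduct.includeLeft) A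

theorem spectrum_one_kronecker_subset {R : Type*} [CommRing R] (B : Matrix n n R) :
    spectrum R ((1 : Matrix m m R) ⊗ₖ B) ⊆ spectrum R B := by
  simpa using AlgHom.spectrum_apply_subset
    ((kroneckerAlgEquiv m n R).toAlgHom.comp Algebra.TensorProduct.includeRight) B

theorem spectrum_kronecker_subset {K : Type*} [Field K] [IsAlgClosed K] (A : Matrix m m K)
    (B : Matrix n n K) :
    spectrum K (A ⊗ₖ B) ⊆ spectrum K A * spectrum K B := by
  have hAB : A ⊗ₖ B = (A ⊗ₖ (1 : Matrix n n K)) * ((1 : Matrix m m K) ⊗ₖ B) := by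
    rw [← mul_kronecker_mul, mul_one, one_mul]
  have hcomm : Commute (A ⊗ₖ (1 : Matrix n n K)) ((1 : Matrix m m K) ⊗ₖ B) := by
    simp only [Commute, SemiconjBy, ← mul_kronecker_mul, mul_one, one_mul]
  rw [hAB]
  exact (spectrum_mul_subset_of_commute hcomm).trans
    (Set.mul_subset_mul (spectrum_kronecker_one_subset A) (spectrum_one_kronecker_subset B))

end Matrix

theorem spectrum.one_sub_smul_eq_image {K A : Type*} [Field K] [IsAlgClosed K] [Ring A]
    [Algebra K A] (a : A) (ha : (spectrum K a).Nonempty) (μ : K) :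
    spectrum K (1 - μ • a) = (fun h => 1 - μ * h) '' spectrum K a := by
  have hp : 1 - μ • a = Polynomial.aeval a (1 - Polynomial.C μ * Polynomial.X) := by
    simp [Algebra.smul_def]
  rw [hp, spectrum.map_polynomial_aeval_of_nonempty a _ ha]
  simp

section

variable {ι κ : Type} [Fintype ι] [DecidableEq ι] [Fintype κ] [DecidableEq κ]

theorem specC_kronecker_subset (A : Matrix ι ι ℝ) (B : Matrix κ κ ℝ) :
    specC (A ⊗ₖ B) ⊆ specC A * specC B := by
  have hmap : (A ⊗ₖ B : Matrix (ι × κ) (ι × κ) ℝ).map (fun x => (x : ℂ)) =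
      A.map (fun x => (x : ℂ)) ⊗ₖ B.map (fun x => (x : ℂ)) := by
    ext; simp [kroneckerMap_apply]
  unfold specC
  rw [hmap]
  exact spectrum_kronecker_subset _ _

theorem specC_one_sub_smul [Nonempty ι] (H : Matrix ι ι ℝ) (μ : ℝ) :
    specC (1 - μ • H) = (fun h : ℂ => 1 - μ * h) '' specC H := by
  have hmap : (1 - μ • H).map (fun x => (x : ℂ)) = 1 - (μ : ℂ) • H.map (fun x => (x : ℂ)) := by
    ext i j; by_cases hij : i = j <;> simp [one_apply, hij]
  unfold specC
  rw [hmap, spectrum.one_sub_smul_eq_image _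
    (spectrum.nonempty_of_isAlgClosed_of_finiteDimensional ℂ _)]

theorem isSchur_one_sub_smul_kronecker [Nonempty ι] (H : Matrix ι ι ℝ) (S : Matrix κ κ ℝ)
    {L μ : ℝ} (hS : ∀ b ∈ specC S, ‖b‖ ≤ L) (hH : ∀ h ∈ specC H, ‖1 - μ * h‖ * L < 1) :
    IsSchur ((1 : Matrix ι ι ℝ) ⊗ₖ S - μ • (H ⊗ₖ S)) := by
  intro z hz
  have hfactor : (1 : Matrix ι ι ℝ) ⊗ₖ S - μ • (H ⊗ₖ S) = (1 - μ • H) ⊗ₖ S := by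
    ext; simp [kroneckerMap_apply, sub_mul, mul_assoc]
  rw [hfactor] at hz
  obtain ⟨a, ha, b, hb, rfl⟩ := specC_kronecker_subset _ _ hz
  rw [specC_one_sub_smul] at ha
  obtain ⟨h, hh, rfl⟩ := ha
  calc ‖(1 - μ * h) * b‖ = ‖1 - μ * h‖ * ‖b‖ := norm_mul _ _
    _ ≤ ‖1 - μ * h‖ * L := mul_le_mul_of_nonneg_left (hS b hb) (norm_nonneg _)
    _ < 1 := hH h hh

end

/- `gainDiscr L h` is `Δ(h)`; `gainLower L h` and `gainUpper L h` are the two roots in `μ` of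
`‖1 - μ h‖ = 1 / L`. -/
noncomputable def gainDiscr (L : ℝ) (h : ℂ) : ℝ := ‖h‖ ^ 2 / L ^ 2 - h.im ^ 2
noncomputable def gainLower (L : ℝ) (h : ℂ) : ℝ := (h.re - √(gainDiscr L h)) / ‖h‖ ^ 2
noncomputable def gainUpper (L : ℝ) (h : ℂ) : ℝ := (h.re + √(gainDiscr L h)) / ‖h‖ ^ 2

theorem sq_re_le_gainDiscr {L : ℝ} (hL0 : 0 < L) (hL1 : L ≤ 1) (h : ℂ) :
    h.re ^ 2 ≤ gainDiscr L h := by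
  have ht : ‖h‖ ^ 2 = h.re ^ 2 + h.im ^ 2 := by rw [Complex.sq_norm, Complex.normSq_apply]; ring
  have := le_div_self (sq_nonneg ‖h‖) (by positivity : 0 < L ^ 2) (pow_le_one₀ hL0.le hL1)
  rw [gainDiscr]; linarith

theorem gainLower_nonpos {L : ℝ} (hL0 : 0 < L) (hL1 : L ≤ 1) (h : ℂ) : gainLower L h ≤ 0 := by
  have hre : h.re ≤ √(gainDiscr L h) :=
    (le_abs_self _).trans (Real.abs_le_sqrt (sq_re_le_gainDiscr hL0 hL1 h))
  exact div_nonpos_of_nonpos_of_nonneg (sub_nonpos.2 hre) (by positivity)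

theorem gainUpper_pos {L : ℝ} {h : ℂ} (hre : 0 < h.re) : 0 < gainUpper L h := by
  have hh : h ≠ 0 := fun h0 => by simp [h0] at hre
  exact div_pos (add_pos_of_pos_of_nonneg hre (Real.sqrt_nonneg _)) (by positivity)

theorem norm_one_sub_ofReal_mul_sq_mul_sq_norm (μ : ℝ) (h : ℂ) :
    ‖1 - μ * h‖ ^ 2 * ‖h‖ ^ 2 = (μ * ‖h‖ ^ 2 - h.re) ^ 2 + h.im ^ 2 := by
  simp only [Complex.sq_norm, Complex.normSq_apply, Complex.sub_re, Complex.sub_im,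
    Complex.mul_re, Complex.mul_im, Complex.one_re, Complex.one_im, Complex.ofReal_re,
    Complex.ofReal_im]
  ring

theorem norm_one_sub_mul_mul_lt_one {L μ : ℝ} {h : ℂ} (hh : h ≠ 0) (hL : 0 < L)
    (hlo : gainLower L h < μ) (hup : μ < gainUpper L h) : ‖1 - μ * h‖ * L < 1 := by
  have ht : 0 < ‖h‖ ^ 2 := by positivity
  rw [gainLower, div_lt_iff₀ ht] at hlo
  rw [gainUpper, lt_div_iff₀ ht] at hup
  have hs : 0 < √(gainDiscr L h) := by linarith
  have hsq : (μ * ‖h‖ ^ 2 - h.re) ^ 2 < gainDiscr L h := by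
    rw [← Real.sq_sqrt (Real.sqrt_pos.1 hs).le]
    exact sq_lt_sq' (by linarith) (by linarith)
  have hsq_lt : (‖1 - μ * h‖ * L) ^ 2 * ‖h‖ ^ 2 < 1 * ‖h‖ ^ 2 :=
    calc (‖1 - μ * h‖ * L) ^ 2 * ‖h‖ ^ 2
        = L ^ 2 * ((μ * ‖h‖ ^ 2 - h.re) ^ 2 + h.im ^ 2) := by
          rw [← norm_one_sub_ofReal_mul_sq_mul_sq_norm]; ring
      _ < L ^ 2 * (gainDiscr L h + h.im ^ 2) := by gcongr
      _ = 1 * ‖h‖ ^ 2 := by rw [gainDiscr]; field_simp; ring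
  exact (pow_lt_one_iff_of_nonneg (by positivity) two_ne_zero).1
    (lt_of_mul_lt_mul_right hsq_lt ht.le)

theorem observer_gain_marginally_stable_general (N q : ℕ) (hN : 0 < N)
    (S0 : Matrix (Fin q) (Fin q) ℝ) (H : Matrix (Fin N) (Fin N) ℝ)
    (L : ℝ) (hL : IsGreatest ((fun z : ℂ => ‖z‖) '' specC S0) L) (hLpos : 0 < L) (hL1 : L ≤ 1)
    (hH : ∀ h ∈ specC H, 0 < h.re) :
    (∀ h ∈ specC H, 0 < ‖h‖ ^ 2 / L ^ 2 - h.im ^ 2) ∧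
    sSup ((fun h : ℂ =>
        (h.re - Real.sqrt (‖h‖ ^ 2 / L ^ 2 - h.im ^ 2)) / ‖h‖ ^ 2) ''
        specC H) ≤ 0 ∧
    sSup ((fun h : ℂ =>
        (h.re - Real.sqrt (‖h‖ ^ 2 / L ^ 2 - h.im ^ 2)) / ‖h‖ ^ 2) ''
        specC H) <
      sInf ((fun h : ℂ =>
        (h.re + Real.sqrt (‖h‖ ^ 2 / L ^ 2 - h.im ^ 2)) / ‖h‖ ^ 2) ''
        specC H) ∧
    0 < sInf ((fun h : ℂ =>
        (h.re + Real.sqrt (‖h‖ ^ 2 / L ^ 2 - h.im ^ 2)) / ‖h‖ ^ 2) ''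
        specC H) ∧
    (∀ μ : ℝ,
      sSup ((fun h : ℂ =>
          (h.re - Real.sqrt (‖h‖ ^ 2 / L ^ 2 - h.im ^ 2)) / ‖h‖ ^ 2) ''
          specC H) < μ →
      μ < sInf ((fun h : ℂ =>
          (h.re + Real.sqrt (‖h‖ ^ 2 / L ^ 2 - h.im ^ 2)) / ‖h‖ ^ 2) ''
          specC H) →
      IsSchur ((1 : Matrix (Fin N) (Fin N) ℝ) ⊗ₖ S0 - μ • (H ⊗ₖ S0))) ∧
    (∃ μ : ℝ, 0 < μ ∧
      IsSchur ((1 : Matrix (Fin N) (Fin N) ℝ) ⊗ₖ S0 - μ • (H ⊗ₖ S0))) := by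
  have : Nonempty (Fin N) := ⟨⟨0, hN⟩⟩
  have hne : (specC H).Nonempty := spectrum.nonempty_of_isAlgClosed_of_finiteDimensional ℂ _
  have hfin : (specC H).Finite := Matrix.finite_spectrum _
  have hsup : sSup (gainLower L '' specC H) ≤ 0 :=
    Real.sSup_nonpos (by rintro _ ⟨h, -, rfl⟩; exact gainLower_nonpos hLpos hL1 h)
  have hinf : 0 < sInf (gainUpper L '' specC H) :=
    ((hfin.image _).lt_csInf_iff (hne.image _)).2
      (by rintro _ ⟨h, hh, rfl⟩; exact gainUpper_pos (hH h hh))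
  have hschur : ∀ μ : ℝ, sSup (gainLower L '' specC H) < μ →
      μ < sInf (gainUpper L '' specC H) →
      IsSchur ((1 : Matrix (Fin N) (Fin N) ℝ) ⊗ₖ S0 - μ • (H ⊗ₖ S0)) := by
    intro μ hlo hup
    refine isSchur_one_sub_smul_kronecker H S0 (fun b hb => hL.2 ⟨b, hb, rfl⟩) fun h hh => ?_
    have hh0 : h ≠ 0 := fun h0 => (hH h hh).ne' (by simp [h0])
    exact norm_one_sub_mul_mul_lt_one hh0 hLpos
      ((le_csSup (hfin.image _).bddAbove ⟨h, hh, rfl⟩).trans_lt hlo)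
      (hup.trans_le (csInf_le (hfin.image _).bddBelow ⟨h, hh, rfl⟩))
  exact ⟨fun h hh => (pow_pos (hH h hh) 2).trans_le (sq_re_le_gainDiscr hLpos hL1 h), hsup,
    hsup.trans_lt hinf, hinf, hschur,
    ⟨_, half_pos hinf, hschur _ (by linarith) (by linarith)⟩⟩

/-- **Corollary 3.1, case (ii).** Suppose `L = ρ(S0)` satisfies
`0 < L ≤ 1` and every complex eigenvalue of `H` has strictly positive real part. With
`Δ(h) = |h|²/L² − (Im h)²`, one has `Δ(h) > 0` for all eigenvalues `h`,
`max_h (Re h − √Δ(h))/|h|² ≤ 0`, this max is `<` the min `min_h (Re h + √Δ(h))/|h|²`,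
which is `> 0`; every real `μ` strictly between the max and the min makes
`I_N ⊗ S0 − μ (H ⊗ S0)` Schur; in particular some `μ > 0` makes it Schur. -/
theorem observer_gain_marginally_stable (N q : ℕ) (hN : 0 < N) (hq : 0 < q)
    (S0 : Matrix (Fin q) (Fin q) ℝ) (H : Matrix (Fin N) (Fin N) ℝ)
    (L : ℝ) (hL : IsGreatest ((fun z : ℂ => ‖z‖) '' specC S0) L) (hLpos : 0 < L) (hL1 : L ≤ 1)
    (hH : ∀ h ∈ specC H, 0 < h.re) :
    (∀ h ∈ specC H, 0 < ‖h‖ ^ 2 / L ^ 2 - h.im ^ 2) ∧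
    sSup ((fun h : ℂ =>
        (h.re - Real.sqrt (‖h‖ ^ 2 / L ^ 2 - h.im ^ 2)) / ‖h‖ ^ 2) ''
        specC H) ≤ 0 ∧
    sSup ((fun h : ℂ =>
        (h.re - Real.sqrt (‖h‖ ^ 2 / L ^ 2 - h.im ^ 2)) / ‖h‖ ^ 2) ''
        specC H) <
      sInf ((fun h : ℂ =>
        (h.re + Real.sqrt (‖h‖ ^ 2 / L ^ 2 - h.im ^ 2)) / ‖h‖ ^ 2) ''
        specC H) ∧
    0 < sInf ((fun h : ℂ =>
        (h.re + Real.sqrt (‖h‖ ^ 2 / L ^ 2 - h.im ^ 2)) / ‖h‖ ^ 2) ''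
        specC H) ∧
    (∀ μ : ℝ,
      sSup ((fun h : ℂ =>
          (h.re - Real.sqrt (‖h‖ ^ 2 / L ^ 2 - h.im ^ 2)) / ‖h‖ ^ 2) ''
          specC H) < μ →
      μ < sInf ((fun h : ℂ =>
          (h.re + Real.sqrt (‖h‖ ^ 2 / L ^ 2 - h.im ^ 2)) / ‖h‖ ^ 2) ''
          specC H) →
      IsSchur ((1 : Matrix (Fin N) (Fin N) ℝ) ⊗ₖ S0 - μ • (H ⊗ₖ S0))) ∧
    (∃ μ : ℝ, 0 < μ ∧
      IsSchur ((1 : Matrix (Fin N) (Fin N) ℝ) ⊗ₖ S0 - μ • (H ⊗ₖ S0))) :=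
  observer_gain_marginally_stable_general N q hN S0 H L hL hLpos hL1 hH
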